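/- Fix integers n, j, m ≥ 1 with j ≤ n, a composition (n_1,…,n_j) of n into j positive parts, a real α < 1, and real weights V(n,k) with V(n,j) ≠ 0. Let 1 ≤ l ≤ n+m and r ≥ 1, and for a tuple (m_1,…,m_j) set O_l = #{i ∈ {1,…,j} : n_i + m_i = l}. Then the r-th falling factorial moment of the number of old blocks of size l satisfies: ∑ (O_l)_{[r]}·J(m_1,…,m_j; s) = r!·∑_{{ξ_1,…,ξ_r}} [m!·∏_{i=1}^{r} (n_{ξ_i}−α)_{l−n_{ξ_i}}/(∏_{i=1}^{r} (l−n_{ξ_i})!·(m−rl+T)!)]·∑_{k=0}^{m−rl+T} (V(n+m,j+k)/V(n,j))·S(m−rl+T, k; α, −(n−(j−r)α−T)), where the left sum ranges over all tuples (m_1,…,m_j) of nonnegative integers and s ≥ 0 with ∑_{i=1}^{j} m_i + s = m, the right sum ranges over all r-element subsets {ξ_1,…,ξ_r} of {1,…,j} with n_{ξ_i} ≤ l for each i and ∑_{i=1}^{r}(l−n_{ξ_i}) ≤ m, and T = ∑_{i=1}^{r} n_{ξ_i}. -/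

import Mathlib

/-!
Writing `(O_l)_{[r]} = r! · #{r-subsets ξ of the old blocks that reach size l}` turns the moment
into `r!` times a sum over `ξ` of the `J`-mass of the allocations with `m_i = l - n_i` on `ξ`.
These leave `M = m + T - r l` items for the other old blocks and the new ones: `(m_i)_{i ∉ ξ}`
with total `t`, and `s = M - t`. By the multinomial Chu–Vandermonde identity for rising
factorials, the weights `∏_{i ∉ ξ} (n_i - α)_{m_i}` of the tuples with total `t` add up to `(γ)_t`
with `γ = ∑_{i ∉ ξ} (n_i - α) = n - (j - r) α - T`, and the binomial convolution of `(γ)_t` with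
`S(M - t, k; α)` is `S(M, k; α, -γ)`.
-/

/-- Rising factorial `(x)_n = x(x+1)⋯(x+n−1)`. -/
noncomputable def risingFac (x : ℝ) (n : ℕ) : ℝ := ∏ i ∈ Finset.range n, (x + i)

/-- Rising factorial with increment `α`: `(x)_{n↑α} = ∏_{i<n} (x + iα)`. -/
noncomputable def risingFacInc (x α : ℝ) (n : ℕ) : ℝ := ∏ i ∈ Finset.range n, (x + i * α)

/-- Falling factorial `(x)_{[n]} = x(x−1)⋯(x−n+1)`. -/
noncomputable def fallingFac (x : ℝ) (n : ℕ) : ℝ := ∏ i ∈ Finset.range n, (x - i)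

/-- Compositions of `n` into `k` positive parts, as functions `Fin k → ℕ`. -/
def compositions (n k : ℕ) : Finset (Fin k → ℕ) :=
  (Fintype.piFinset fun _ => Finset.range (n + 1)).filter
    (fun f => (∀ i, 0 < f i) ∧ ∑ i, f i = n)

/-- Tuples of `k` nonnegative integers summing to `n`. -/
def weakCompositions (n k : ℕ) : Finset (Fin k → ℕ) :=
  (Fintype.piFinset fun _ => Finset.range (n + 1)).filter (fun f => ∑ i, f i = n)

/-- Generalized (central) Stirling number
`S(n,k;α) = (n!/k!) ∑_{(n_1,…,n_k)} ∏_j (1−α)_{n_j−1}/n_j!`,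
the sum over compositions of `n` into `k` positive parts. -/
noncomputable def genStirling (α : ℝ) (n k : ℕ) : ℝ :=
  (Nat.factorial n : ℝ) / (Nat.factorial k : ℝ) *
    ∑ f ∈ compositions n k, ∏ j, risingFac (1 - α) (f j - 1) / (Nat.factorial (f j) : ℝ)

/-- Non-central generalized Stirling number
`S(n,k;α,γ) = ∑_{s=k}^n C(n,s) S(s,k;α) (−γ)_{n−s}`. -/
noncomputable def genStirlingNC (α γ : ℝ) (n k : ℕ) : ℝ :=
  ∑ s ∈ Finset.Icc k n, (n.choose s : ℝ) * genStirling α s k * risingFac (-γ) (n - s)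

/-- The joint conditional distribution of old-block allocations
`J(m_1,…,m_j;s) = m!/(m_1!⋯m_j!·s!)·∏_i (n_i−α)_{m_i}·
∑_{k=0}^{s} (V(n+m,j+k)/V(n,j))·S(s,k;α)`. -/
noncomputable def oldJoint (α : ℝ) (V : ℕ → ℕ → ℝ) (n j m : ℕ) (nv : Fin j → ℕ)
    (mv : Fin j → ℕ) (s : ℕ) : ℝ :=
  (Nat.factorial m : ℝ) /
      ((∏ i, (Nat.factorial (mv i) : ℝ)) * (Nat.factorial s : ℝ)) *
    (∏ i, risingFac ((nv i : ℝ) - α) (mv i)) *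
    ∑ k ∈ Finset.range (s + 1), (V (n + m) (j + k) / V n j) * genStirling α s k

open Finset

lemma risingFac_zero (x : ℝ) : risingFac x 0 = 1 := prod_range_zero _

lemma risingFac_succ (x : ℝ) (n : ℕ) : risingFac x (n + 1) = risingFac x n * (x + n) :=
  prod_range_succ _ _

lemma risingFac_add (x y : ℝ) (t : ℕ) :
    risingFac (x + y) t =
      ∑ p ∈ antidiagonal t, (t.choose p.1 : ℝ) * (risingFac x p.1 * risingFac y p.2) := by
  induction t with
  | zero => simp [risingFac_zero]
  | succ t ih =>
    rw [sum_antidiagonal_choose_succ_mul (fun a b => risingFac x a * risingFac y b),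
      risingFac_succ, ih, sum_mul, ← sum_add_distrib]
    refine sum_congr rfl fun p hp => ?_
    have hpt := mem_antidiagonal.mp hp
    rw [← Nat.choose_symm_of_eq_add hpt.symm, risingFac_succ, risingFac_succ, ← hpt]
    push_cast
    ring

lemma risingFac_sum {ι : Type*} [DecidableEq ι] (s : Finset ι) (x : ι → ℝ) (t : ℕ) :
    risingFac (∑ i ∈ s, x i) t =
      ∑ g ∈ s.piAntidiag t, (Nat.multinomial s g : ℝ) * ∏ i ∈ s, risingFac (x i) (g i) := by
  induction s using Finset.cons_induction generalizing t with
  | empty => cases t <;> simp [risingFac, prod_range_succ']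
  | cons a s ha ih =>
    rw [sum_cons, risingFac_add, piAntidiag_cons, sum_disjiUnion]
    refine sum_congr rfl fun p hp => ?_
    rw [ih, mul_sum, mul_sum, sum_map]
    refine sum_congr rfl fun g hg => ?_
    have hga : g a = 0 := by
      by_contra h
      exact ha ((mem_piAntidiag.mp hg).2 a h)
    have hoff : ∀ i ∈ s, (g + fun i => if i = a then p.1 else 0) i = g i := fun i hi => by
      simp [ne_of_mem_of_not_mem hi ha]
    have hprod : ∏ i ∈ s, risingFac (x i) ((g + fun i => if i = a then p.1 else 0) i) =
        ∏ i ∈ s, risingFac (x i) (g i) := prod_congr rfl fun i hi => by rw [hoff i hi]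
    rw [addRightEmbedding_apply, Nat.multinomial_cons, prod_cons, Nat.multinomial_congr hoff,
      hprod, sum_congr rfl hoff, (mem_piAntidiag.mp hg).1]
    simp only [Pi.add_apply, hga, if_pos, zero_add, mem_antidiagonal.mp hp]
    push_cast
    ring

lemma fallingFac_natCast (c r : ℕ) : fallingFac (c : ℝ) r = c.descFactorial r := by
  rw [fallingFac, ← descPochhammer_eval_eq_prod_range, descPochhammer_eval_eq_descFactorial]

lemma genStirling_eq_zero_of_lt (α : ℝ) {s k : ℕ} (h : s < k) : genStirling α s k = 0 := by
  suffices compositions s k = ∅ by simp [genStirling, this]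
  refine eq_empty_of_forall_notMem fun f hf => ?_
  obtain ⟨-, hpos, hsum⟩ := mem_filter.mp hf
  have : k ≤ ∑ i, f i := by
    simpa using sum_le_sum fun i (_ : i ∈ univ) => Nat.succ_le_of_lt (hpos i)
  omega

lemma genStirlingNC_eq_sum_antidiagonal (α x : ℝ) (M k : ℕ) :
    genStirlingNC α (-x) M k =
      ∑ p ∈ antidiagonal M, (M.choose p.1 : ℝ) * risingFac x p.1 * genStirling α p.2 k := by
  have hIcc : Icc k M ⊆ range (M + 1) := fun s hs => by
    simp only [mem_Icc, mem_range] at hs ⊢; omega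
  rw [genStirlingNC, neg_neg, sum_subset hIcc fun s _ hs => ?_, ← Nat.sum_antidiagonal_swap]
  · simp only [Prod.fst_swap, Prod.snd_swap]
    rw [Nat.sum_antidiagonal_eq_sum_range_succ
      (fun a b => (M.choose b : ℝ) * risingFac x b * genStirling α a k)]
    refine sum_congr rfl fun s hs => ?_
    rw [Nat.choose_symm (Nat.lt_succ_iff.mp (mem_range.mp hs))]
    ring
  · rw [genStirling_eq_zero_of_lt α (by simp only [mem_Icc, mem_range] at *; omega), mul_zero,
      zero_mul]

lemma sum_antidiagonal_risingFac_mul_sum_genStirling (α x : ℝ) (W : ℕ → ℝ) (M : ℕ) :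
    ∑ p ∈ antidiagonal M, (M.choose p.1 : ℝ) * risingFac x p.1 *
        ∑ k ∈ range (p.2 + 1), W k * genStirling α p.2 k =
      ∑ k ∈ range (M + 1), W k * genStirlingNC α (-x) M k := by
  have hext : ∀ p ∈ antidiagonal M, ∑ k ∈ range (p.2 + 1), W k * genStirling α p.2 k =
      ∑ k ∈ range (M + 1), W k * genStirling α p.2 k := fun p hp => by
    refine sum_subset (range_subset_range.mpr (by have := mem_antidiagonal.mp hp; omega))
      fun k _ hk => ?_
    rw [genStirling_eq_zero_of_lt α (by simpa using hk), mul_zero]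
  rw [sum_congr rfl fun p hp => congrArg (_ * ·) (hext p hp)]
  simp_rw [mul_sum, genStirlingNC_eq_sum_antidiagonal]
  rw [sum_comm]
  refine sum_congr rfl fun k _ => ?_
  rw [mul_sum]
  exact sum_congr rfl fun p _ => by ring

lemma powersetCard_filter_univ {α : Type*} [Fintype α] (p : α → Prop) [DecidablePred p] (r : ℕ) :
    powersetCard r (univ.filter p) = (powersetCard r univ).filter fun ξ => ∀ a ∈ ξ, p a := by
  ext ξ
  simp only [mem_powersetCard, mem_filter, subset_iff, mem_univ, true_and, implies_true]
  tauto

lemma sum_fallingFac_card_filter_mul {α β : Type*} [Fintype α] (s : Finset β)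
    (p : β → α → Prop) [∀ b, DecidablePred (p b)] (f : β → ℝ) (r : ℕ) :
    ∑ b ∈ s, fallingFac ((univ.filter (p b)).card : ℝ) r * f b =
      r.factorial * ∑ ξ ∈ powersetCard r univ, ∑ b ∈ s.filter (fun b => ∀ a ∈ ξ, p b a), f b := by
  have hcount : ∀ b, fallingFac ((univ.filter (p b)).card : ℝ) r =
      r.factorial * ∑ ξ ∈ powersetCard r univ, if ∀ a ∈ ξ, p b a then 1 else 0 := fun b => by
    rw [fallingFac_natCast, Nat.descFactorial_eq_factorial_mul_choose, ← card_powersetCard,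
      powersetCard_filter_univ, card_filter]
    push_cast
    rfl
  simp_rw [hcount, sum_filter, mul_assoc, ← mul_sum, sum_mul, ite_mul, one_mul, zero_mul]
  rw [sum_comm]

lemma piecewise_eq_right_of_eqOn {ι β : Type*} [DecidableEq ι] {ξ : Finset ι} {f g : ι → β}
    (h : ∀ i ∈ ξ, f i = g i) : ξ.piecewise f g = g := by
  rw [piecewise_congr ξ h fun _ _ => rfl, piecewise_same]

section Piecewise

variable {ι : Type*} [Fintype ι] [DecidableEq ι]

@[to_additive]
lemma prod_apply_piecewise {M : Type*} [CommMonoid M] (ξ : Finset ι) (d g : ι → ℕ)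
    (F : ι → ℕ → M) :
    ∏ i, F i (ξ.piecewise d g i) = (∏ i ∈ ξ, F i (d i)) * ∏ i ∈ ξᶜ, F i (g i) := by
  rw [← prod_mul_prod_compl ξ]
  congr 1 <;> refine prod_congr rfl fun i hi => ?_
  · rw [piecewise_eq_of_mem _ _ _ hi]
  · rw [piecewise_eq_of_notMem _ _ _ (mem_compl.mp hi)]

lemma factorial_div_prod_piecewise (ξ : Finset ι) (d g : ι → ℕ) {m M s t : ℕ}
    (hg : ∑ i ∈ ξᶜ, g i = t) (hts : t + s = M) :
    (m.factorial : ℝ) / ((∏ i, ((ξ.piecewise d g i).factorial : ℝ)) * s.factorial) =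
      m.factorial / ((∏ i ∈ ξ, ((d i).factorial : ℝ)) * M.factorial) *
        ((M.choose t : ℝ) * Nat.multinomial ξᶜ g) := by
  have hmult : (∏ i ∈ ξᶜ, ((g i).factorial : ℝ)) * Nat.multinomial ξᶜ g = t.factorial := by
    rw [← hg]; exact_mod_cast Nat.multinomial_spec ξᶜ g
  have hchoose : (M.choose t : ℝ) * t.factorial * s.factorial = M.factorial := by
    rw [← hts, Nat.choose_symm_add]; exact_mod_cast Nat.add_choose_mul_factorial_mul_factorial t s
  have hC : (M.choose t : ℝ) ≠ 0 := by
    exact_mod_cast (Nat.choose_pos (by omega)).ne'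
  have hN : (Nat.multinomial ξᶜ g : ℝ) ≠ 0 := by
    exact_mod_cast (Nat.multinomial_pos ξᶜ g).ne'
  rw [prod_apply_piecewise ξ d g fun _ k => (k.factorial : ℝ), ← hchoose, ← hmult]
  field_simp

lemma piecewise_zero_mem_piAntidiag_compl (ξ : Finset ι) (mv : ι → ℕ) :
    ξ.piecewise (0 : ι → ℕ) mv ∈ ξᶜ.piAntidiag (∑ i ∈ ξᶜ, mv i) := by
  refine mem_piAntidiag.mpr ⟨sum_congr rfl fun i hi => ?_, fun i hi => ?_⟩
  · exact piecewise_eq_of_notMem _ _ _ (mem_compl.mp hi)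
  · exact mem_compl.mpr fun hiξ => hi (piecewise_eq_of_mem _ _ _ hiξ)

lemma sum_filter_sum_le_eqOn {R : Type*} [AddCommMonoid R] (ξ : Finset ι) (d : ι → ℕ) {m : ℕ}
    (hd : ∑ i ∈ ξ, d i ≤ m) (f : (ι → ℕ) → ℕ → R) :
    ∑ mv ∈ ((Fintype.piFinset fun _ : ι => range (m + 1)).filter fun mv => ∑ i, mv i ≤ m).filter
        (fun mv => ∀ i ∈ ξ, mv i = d i), f mv (m - ∑ i, mv i) =
      ∑ p ∈ antidiagonal (m - ∑ i ∈ ξ, d i), ∑ g ∈ ξᶜ.piAntidiag p.1, f (ξ.piecewise d g) p.2 := by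
  have hsum : ∀ mv : ι → ℕ, (∀ i ∈ ξ, mv i = d i) → ∑ i, mv i = ∑ i ∈ ξ, d i + ∑ i ∈ ξᶜ, mv i :=
    fun mv hmv => by rw [← sum_add_sum_compl ξ, sum_congr rfl hmv]
  have hinv : ∀ mv : ι → ℕ, (∀ i ∈ ξ, mv i = d i) →
      ξ.piecewise d (ξ.piecewise (0 : ι → ℕ) mv) = mv :=
    fun mv hmv => by
      rw [piecewise_idem_right, piecewise_eq_right_of_eqOn fun i hi => (hmv i hi).symm]
  rw [sum_sigma']
  refine sum_nbij' (fun mv => ⟨(∑ i ∈ ξᶜ, mv i, m - ∑ i, mv i), ξ.piecewise (0 : ι → ℕ) mv⟩)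
    (fun q => ξ.piecewise d q.2) (fun mv hmv => ?_) (fun q hq => ?_)
    (fun mv hmv => hinv mv (mem_filter.mp hmv).2) (fun q hq => ?_)
    (fun mv hmv => by rw [hinv mv (mem_filter.mp hmv).2])
  · have := hsum mv (mem_filter.mp hmv).2
    have := (mem_filter.mp (mem_filter.mp hmv).1).2
    exact mem_sigma.mpr ⟨HasAntidiagonal.mem_antidiagonal.mpr (by dsimp only; omega),
      piecewise_zero_mem_piAntidiag_compl ξ mv⟩
  all_goals
    obtain ⟨⟨a, b⟩, g⟩ := q
    simp only [mem_sigma, HasAntidiagonal.mem_antidiagonal, mem_piAntidiag] at hq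
    obtain ⟨hab, hg, hsupp⟩ := hq
    dsimp only
    have htot : ∑ i, ξ.piecewise d g i = ∑ i ∈ ξ, d i + a := by
      rw [sum_apply_piecewise ξ d g fun _ k => k, ← hg]
  · refine mem_filter.mpr ⟨mem_filter.mpr ⟨Fintype.mem_piFinset.mpr fun i => ?_, by omega⟩,
      fun i hi => piecewise_eq_of_mem _ _ _ hi⟩
    have := single_le_sum (fun i _ => Nat.zero_le (ξ.piecewise d g i)) (mem_univ i)
    exact mem_range.mpr (by omega)
  · have hpiece : ξ.piecewise (0 : ι → ℕ) (ξ.piecewise d g) = g := by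
      rw [piecewise_idem_right, piecewise_eq_right_of_eqOn fun i hi => ?_]
      by_contra h
      exact mem_compl.mp (hsupp i (Ne.symm h)) hi
    refine Sigma.ext (Prod.ext ?_ ?_) (heq_of_eq hpiece)
    · rw [← hg]
      exact sum_congr rfl fun i hi => piecewise_eq_of_notMem _ _ _ (mem_compl.mp hi)
    · dsimp only
      omega

end Piecewise

section OldJoint

variable (α : ℝ) (V : ℕ → ℕ → ℝ) (n j m : ℕ) (nv : Fin j → ℕ)

lemma oldJoint_piecewise (ξ : Finset (Fin j)) (d g : Fin j → ℕ) {M s t : ℕ}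
    (hg : ∑ i ∈ ξᶜ, g i = t) (hts : t + s = M) :
    oldJoint α V n j m nv (ξ.piecewise d g) s =
      m.factorial * (∏ i ∈ ξ, risingFac (nv i - α) (d i)) /
          ((∏ i ∈ ξ, ((d i).factorial : ℝ)) * M.factorial) *
        ((M.choose t : ℝ) * (Nat.multinomial ξᶜ g * ∏ i ∈ ξᶜ, risingFac (nv i - α) (g i)) *
          ∑ k ∈ range (s + 1), V (n + m) (j + k) / V n j * genStirling α s k) := by
  rw [oldJoint, factorial_div_prod_piecewise ξ d g hg hts,
    prod_apply_piecewise ξ d g fun i k => risingFac (nv i - α) k]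
  ring

lemma sum_oldJoint_filter_eqOn (ξ : Finset (Fin j)) (d : Fin j → ℕ) (hd : ∑ i ∈ ξ, d i ≤ m) :
    ∑ mv ∈ ((Fintype.piFinset fun _ : Fin j => range (m + 1)).filter
        fun mv => ∑ i, mv i ≤ m).filter (fun mv => ∀ i ∈ ξ, mv i = d i),
      oldJoint α V n j m nv mv (m - ∑ i, mv i) =
    m.factorial * (∏ i ∈ ξ, risingFac (nv i - α) (d i)) /
        ((∏ i ∈ ξ, ((d i).factorial : ℝ)) * (m - ∑ i ∈ ξ, d i).factorial) *
      ∑ k ∈ range (m - ∑ i ∈ ξ, d i + 1), V (n + m) (j + k) / V n j *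
        genStirlingNC α (-∑ i ∈ ξᶜ, ((nv i : ℝ) - α)) (m - ∑ i ∈ ξ, d i) k := by
  -- Over `Fin j` the filter predicate gets a different (but equal) `Decidable` instance than in
  -- the generic reindexing lemma; `congr!` bridges the two.
  refine Eq.trans (by congr!) ((sum_filter_sum_le_eqOn ξ d hd (oldJoint α V n j m nv)).trans ?_)
  rw [← sum_antidiagonal_risingFac_mul_sum_genStirling, mul_sum]
  refine sum_congr rfl fun p hp => ?_
  rw [risingFac_sum, mul_sum (ξᶜ.piAntidiag p.1), sum_mul, mul_sum (ξᶜ.piAntidiag p.1)]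
  refine sum_congr rfl fun g hg => ?_
  rw [oldJoint_piecewise α V n j m nv ξ d g (mem_piAntidiag.mp hg).1
    (HasAntidiagonal.mem_antidiagonal.mp hp)]

lemma sum_oldJoint_filter_blockSize (hsum : ∑ i, nv i = n) (l : ℕ) (ξ : Finset (Fin j)) :
    ∑ mv ∈ ((Fintype.piFinset fun _ : Fin j => range (m + 1)).filter
        fun mv => ∑ i, mv i ≤ m).filter (fun mv => ∀ i ∈ ξ, nv i + mv i = l),
      oldJoint α V n j m nv mv (m - ∑ i, mv i) =
    if (∀ i ∈ ξ, nv i ≤ l) ∧ ∑ i ∈ ξ, (l - nv i) ≤ m then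
      m.factorial * (∏ i ∈ ξ, risingFac (nv i - α) (l - nv i)) /
          ((∏ i ∈ ξ, ((l - nv i).factorial : ℝ)) *
            (m + ∑ i ∈ ξ, nv i - ξ.card * l).factorial) *
        ∑ k ∈ range (m + ∑ i ∈ ξ, nv i - ξ.card * l + 1), V (n + m) (j + k) / V n j *
          genStirlingNC α (-((n : ℝ) - ((j : ℝ) - ξ.card) * α - ∑ i ∈ ξ, (nv i : ℝ)))
            (m + ∑ i ∈ ξ, nv i - ξ.card * l) k
    else 0 := by
  split_ifs with hξ
  · obtain ⟨hnl, hDm⟩ := hξ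
    have hM : m - ∑ i ∈ ξ, (l - nv i) = m + ∑ i ∈ ξ, nv i - ξ.card * l := by
      have : ∑ i ∈ ξ, (l - nv i) + ∑ i ∈ ξ, nv i = ξ.card * l := by
        rw [← sum_add_distrib, sum_congr rfl fun i hi => Nat.sub_add_cancel (hnl i hi),
          sum_const, smul_eq_mul]
      omega
    have hγ : ∑ i ∈ ξᶜ, ((nv i : ℝ) - α) = n - (j - ξ.card) * α - ∑ i ∈ ξ, (nv i : ℝ) := by
      have hsplit : ∑ i ∈ ξ, (nv i : ℝ) + ∑ i ∈ ξᶜ, (nv i : ℝ) = n := by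
        rw [sum_add_sum_compl, ← Nat.cast_sum, hsum]
      rw [sum_sub_distrib, sum_const, card_compl, Fintype.card_fin, nsmul_eq_mul,
        Nat.cast_sub (card_le_univ ξ |>.trans_eq (Fintype.card_fin j))]
      linarith
    rw [filter_congr (q := fun mv => ∀ i ∈ ξ, mv i = l - nv i) fun mv _ =>
      forall₂_congr fun i hi => by have := hnl i hi; omega]
    rw [sum_oldJoint_filter_eqOn α V n j m nv ξ (fun i => l - nv i) hDm, hM, hγ]
  · refine sum_eq_zero fun mv hmv => absurd ?_ hξ
    simp only [mem_filter] at hmv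
    obtain ⟨⟨-, hle⟩, hl⟩ := hmv
    refine ⟨fun i hi => by have := hl i hi; omega, ?_⟩
    calc ∑ i ∈ ξ, (l - nv i) = ∑ i ∈ ξ, mv i :=
          sum_congr rfl fun i hi => by have := hl i hi; omega
      _ ≤ ∑ i, mv i := sum_le_sum_of_subset (subset_univ ξ)
      _ ≤ m := hle

end OldJoint

theorem oldJoint_fallingFactorial_moment_general (n j m : ℕ)
    (nv : Fin j → ℕ) (hsum : ∑ i, nv i = n)
    (α : ℝ) (V : ℕ → ℕ → ℝ)
    (l r : ℕ) :
    ∑ mv ∈ (Fintype.piFinset fun _ : Fin j => Finset.range (m + 1)).filter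
        (fun mv => ∑ i, mv i ≤ m),
        fallingFac (((Finset.univ.filter fun i => nv i + mv i = l).card : ℕ) : ℝ) r *
          oldJoint α V n j m nv mv (m - ∑ i, mv i) =
      (Nat.factorial r : ℝ) *
        ∑ ξ ∈ (Finset.powersetCard r (Finset.univ : Finset (Fin j))).filter
            (fun ξ => (∀ i ∈ ξ, nv i ≤ l) ∧ (∑ i ∈ ξ, (l - nv i)) ≤ m),
          (Nat.factorial m : ℝ) * (∏ i ∈ ξ, risingFac ((nv i : ℝ) - α) (l - nv i)) /
              ((∏ i ∈ ξ, (Nat.factorial (l - nv i) : ℝ)) *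
                (Nat.factorial (m + (∑ i ∈ ξ, nv i) - r * l) : ℝ)) *
            ∑ k ∈ Finset.range (m + (∑ i ∈ ξ, nv i) - r * l + 1),
              (V (n + m) (j + k) / V n j) *
                genStirlingNC α
                  (-((n : ℝ) - ((j : ℝ) - r) * α - ∑ i ∈ ξ, (nv i : ℝ)))
                  (m + (∑ i ∈ ξ, nv i) - r * l) k := by
  rw [sum_fallingFac_card_filter_mul, sum_filter]
  congr 1
  refine sum_congr rfl fun ξ hξ => ?_
  rw [← (mem_powersetCard.mp hξ).2]
  refine Eq.trans ?_ (sum_oldJoint_filter_blockSize α V n j m nv hsum l ξ)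
  congr!

/-- The `r`-th falling factorial moment of the number of old blocks of size `l`. -/
theorem oldJoint_fallingFactorial_moment (n j m : ℕ) (hn : 1 ≤ n) (hj : 1 ≤ j)
    (hm : 1 ≤ m) (hjn : j ≤ n)
    (nv : Fin j → ℕ) (hnv : ∀ i, 0 < nv i) (hsum : ∑ i, nv i = n)
    (α : ℝ) (hα : α < 1) (V : ℕ → ℕ → ℝ) (hV : V n j ≠ 0)
    (l r : ℕ) (hl : 1 ≤ l) (hln : l ≤ n + m) (hr : 1 ≤ r) :
    ∑ mv ∈ (Fintype.piFinset fun _ : Fin j => Finset.range (m + 1)).filter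
        (fun mv => ∑ i, mv i ≤ m),
        fallingFac (((Finset.univ.filter fun i => nv i + mv i = l).card : ℕ) : ℝ) r *
          oldJoint α V n j m nv mv (m - ∑ i, mv i) =
      (Nat.factorial r : ℝ) *
        ∑ ξ ∈ (Finset.powersetCard r (Finset.univ : Finset (Fin j))).filter
            (fun ξ => (∀ i ∈ ξ, nv i ≤ l) ∧ (∑ i ∈ ξ, (l - nv i)) ≤ m),
          (Nat.factorial m : ℝ) * (∏ i ∈ ξ, risingFac ((nv i : ℝ) - α) (l - nv i)) /
              ((∏ i ∈ ξ, (Nat.factorial (l - nv i) : ℝ)) *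
                (Nat.factorial (m + (∑ i ∈ ξ, nv i) - r * l) : ℝ)) *
            ∑ k ∈ Finset.range (m + (∑ i ∈ ξ, nv i) - r * l + 1),
              (V (n + m) (j + k) / V n j) *
                genStirlingNC α
                  (-((n : ℝ) - ((j : ℝ) - r) * α - ∑ i ∈ ξ, (nv i : ℝ)))
                  (m + (∑ i ∈ ξ, nv i) - r * l) k :=
  oldJoint_fallingFactorial_moment_general n j m nv hsum α V l r
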